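/- The domain of an assembly of complexity at most 2 is a semilinear subset of ℤ². -/
import Mathlib


/-! ## The abstract tile assembly model at temperature 1 -/

structure Glue where
  label : ℕ
  strength : ℕ
deriving DecidableEq

instance : Inhabited Glue := ⟨⟨0, 0⟩⟩

/-- A tile type: a unit square with a glue on each of its four sides. -/
structure TileType where
  north : Glue
  east : Glue
  south : Glue
  west : Glue
deriving DecidableEq

instance : Inhabited TileType := ⟨⟨default, default, default, default⟩⟩

/-- Positions of the discrete plane `ℤ²`. -/
abbrev Pos : Type := ℤ × ℤ

/-- A tile is a position together with a tile type. -/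
abbrev Tile : Type := Pos × TileType

/-- Two equal glues bind iff their common strength is at least 1. -/
def glueBind (g g' : Glue) : Prop := g = g' ∧ 1 ≤ g.strength

/-- Two tiles interact (bind) if they are at adjacent positions and the glues on
their abutting sides are equal with strength at least 1. -/
def interact (a b : Tile) : Prop :=
  (b.1 = (a.1.1, a.1.2 + 1) ∧ glueBind a.2.north b.2.south) ∨
  (b.1 = (a.1.1 + 1, a.1.2) ∧ glueBind a.2.east b.2.west) ∨
  (b.1 = (a.1.1, a.1.2 - 1) ∧ glueBind a.2.south b.2.north) ∨
  (b.1 = (a.1.1 - 1, a.1.2) ∧ glueBind a.2.west b.2.east)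

/-- An assembly: a partial function from `ℤ²` to tile types. -/
abbrev Assembly : Type := Pos → Option TileType

/-- The domain of an assembly. -/
def adom (α : Assembly) : Set Pos := {p | α p ≠ none}

/-- Translation of an assembly by a vector: `(α + v)(x) = α (x - v)`. -/
def translateA (α : Assembly) (v : Pos) : Assembly := fun p => α (p - v)

/-- Adjacency in `ℤ²`. -/
def adjacent (p q : Pos) : Prop := (p.1 - q.1).natAbs + (p.2 - q.2).natAbs = 1

/-- The domain of the assembly is a connected subset of `ℤ²`. -/
def ConnectedDom (α : Assembly) : Prop :=
  ∀ p q, p ∈ adom α → q ∈ adom α →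
    Relation.ReflTransGen (fun a b => a ∈ adom α ∧ b ∈ adom α ∧ adjacent a b) p q

/-- Two occupied positions of an assembly are bound. -/
def bindsIn (α : Assembly) (p q : Pos) : Prop :=
  ∃ t t', α p = some t ∧ α q = some t' ∧ interact (p, t) (q, t')

/-- Stability at temperature 1: the binding graph is connected (every cut has
weight at least 1). -/
def StableA (α : Assembly) : Prop :=
  ConnectedDom α ∧ ∀ p q, p ∈ adom α → q ∈ adom α → Relation.ReflTransGen (bindsIn α) p q

/-- `β` is obtained from `α` by the stable binding of a single tile of type from `T`. -/
def Attaches (T : Finset TileType) (α β : Assembly) : Prop :=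
  ∃ p t, t ∈ T ∧ α p = none ∧ β p = some t ∧ (∀ q, q ≠ p → β q = α q) ∧
    ∃ q t', α q = some t' ∧ interact (p, t) (q, t')

/-- `α` is producible from the seed `σ`: it is the union of a (possibly infinite)
sequence of single-tile additions starting from `σ`. -/
def Producible (T : Finset TileType) (σ α : Assembly) : Prop :=
  ∃ f : ℕ → Assembly, f 0 = σ ∧
    (∀ n, f (n + 1) = f n ∨ Attaches T (f n) (f (n + 1))) ∧
    (∀ p t, α p = some t ↔ ∃ n, f n p = some t)

/-- `α` is a terminal assembly of the system `(T, σ, 1)`. -/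
def Terminal (T : Finset TileType) (σ α : Assembly) : Prop :=
  Producible T σ α ∧ ∀ β, ¬ Attaches T α β

/-- The seed is an assembly over `T` which is stable at temperature 1. -/
def SeedOk (T : Finset TileType) (σ : Assembly) : Prop :=
  (∀ p t, σ p = some t → t ∈ T) ∧ StableA σ

/-- `α` is `v`-periodic. -/
def PeriodicA (α : Assembly) (v : Pos) : Prop := v ≠ 0 ∧ translateA α v = α

/-- Collinearity of two vectors of `ℤ²`. -/
def Collin (u v : Pos) : Prop := u.1 * v.2 = u.2 * v.1

/-- `α` is bi-periodic: periodic for two non-collinear vectors. -/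
def BiPeriodicA (α : Assembly) : Prop :=
  ∃ u v : Pos, ¬ Collin u v ∧ PeriodicA α u ∧ PeriodicA α v

/-- `α` is simply periodic: periodic but not bi-periodic. -/
def SimplyPeriodicA (α : Assembly) : Prop := (∃ v, PeriodicA α v) ∧ ¬ BiPeriodicA α

/-- `α` is aperiodic. -/
def AperiodicA (α : Assembly) : Prop := ¬ ∃ v, PeriodicA α v

/-- Complexity of an assembly: a finite assembly has complexity 0; for `i ≥ 1` an
assembly has complexity `i` if it is `⋃_{ℓ ∈ ℕ} (β + ℓ v)` for some `β` of
complexity `i - 1`, or a finite union of assemblies of complexity less than `i`. -/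
inductive HasComplexity : Assembly → ℕ → Prop
  | finite (α : Assembly) (h : (adom α).Finite) : HasComplexity α 0
  | pump (i : ℕ) (β : Assembly) (v : Pos) (α : Assembly) (hβ : HasComplexity β i)
      (hα : ∀ p t, α p = some t ↔ ∃ ℓ : ℕ, β (p - (ℓ : ℤ) • v) = some t) :
      HasComplexity α (i + 1)
  | union (i n : ℕ) (f : Fin n → Assembly) (c : Fin n → ℕ) (hc : ∀ k, c k ≤ i)
      (hf : ∀ k, HasComplexity (f k) (c k)) (α : Assembly)
      (hα : ∀ p t, α p = some t ↔ ∃ k, f k p = some t) :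
      HasComplexity α (i + 1)

/-! ## Paths -/

/-- A (finite, nonempty) path: a sequence of tiles with pairwise distinct positions
in which each consecutive pair of tiles interacts. -/
def IsPath (P : List Tile) : Prop :=
  P ≠ [] ∧ List.Chain' interact P ∧ (P.map Prod.fst).Nodup

/-- `P` is a path of `α`: `asm(P)` is a subassembly of `α`. -/
def PathIn (α : Assembly) (P : List Tile) : Prop :=
  IsPath P ∧ ∀ a ∈ P, α a.1 = some a.2

/-- Translation of a tile. -/
def tTile (a : Tile) (w : Pos) : Tile := (a.1 + w, a.2)

/-- Translation of a path. -/
def translatePath (P : List Tile) (w : Pos) : List Tile := P.map (fun a => tTile a w)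

/-- The `i`-th tile of a finite path. -/
def nth (P : List Tile) (i : ℕ) : Tile := P.getD i default

/-- The vector `pos(P_{|P|-1}) - pos(P₀)` of a finite path. -/
def pathVec (P : List Tile) : Pos := (nth P (P.length - 1)).1 - (nth P 0).1

/-- `P_{k mod (|P|-1)} + ⌊k / (|P|-1)⌋ • pathVec P`. -/
def pumpTile (P : List Tile) (k : ℤ) : Tile :=
  tTile (nth P ((k % ((P.length : ℤ) - 1)).toNat)) ((k / ((P.length : ℤ) - 1)) • pathVec P)

/-- The pumping of `P`: an infinite sequence of tiles indexed by `ℕ`. -/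
def pump (P : List Tile) (k : ℕ) : Tile := pumpTile P k

/-- The bi-pumping of `P`: a bi-infinite sequence of tiles indexed by `ℤ`. -/
def bipump (P : List Tile) (k : ℤ) : Tile := pumpTile P k

/-- `P` is a good candidate: `type(P₀) = type(P_{|P|-1})` and the only intersection
between `P` and `P + pathVec P` is the agreement of `P₀ + pathVec P` with `P_{|P|-1}`. -/
def GoodCandidate (P : List Tile) : Prop :=
  2 ≤ P.length ∧ (nth P 0).2 = (nth P (P.length - 1)).2 ∧
  ∀ i j, i < P.length → j < P.length → (nth P i).1 + pathVec P = (nth P j).1 →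
    i = 0 ∧ j = P.length - 1

/-- A one-way infinite path. -/
def IsInfPath (Q : ℕ → Tile) : Prop :=
  (∀ k, interact (Q k) (Q (k + 1))) ∧ Function.Injective fun k => (Q k).1

/-- A bi-infinite path. -/
def IsBiPath (Q : ℤ → Tile) : Prop :=
  (∀ k : ℤ, interact (Q k) (Q (k + 1))) ∧ Function.Injective fun k => (Q k).1

/-- A one-way infinite path of `α`. -/
def InfPathIn (α : Assembly) (Q : ℕ → Tile) : Prop :=
  IsInfPath Q ∧ ∀ k, α (Q k).1 = some (Q k).2

/-- A bi-infinite path of `α`. -/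
def BiPathIn (α : Assembly) (Q : ℤ → Tile) : Prop :=
  IsBiPath Q ∧ ∀ k, α (Q k).1 = some (Q k).2

/-- A good candidate `P` is pumpable (with respect to the terminal assembly `α`)
if `pump P ∈ P[α]`. -/
def Pumpable (α : Assembly) (P : List Tile) : Prop :=
  GoodCandidate P ∧ InfPathIn α (pump P)

/-- A good candidate `P` is bi-pumpable if `bipump P ∈ P[α]`. -/
def BiPumpable (α : Assembly) (P : List Tile) : Prop :=
  GoodCandidate P ∧ BiPathIn α (bipump P)

/-- Simply pumpable: pumpable but not bi-pumpable. -/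
def SimplyPumpable (α : Assembly) (P : List Tile) : Prop :=
  Pumpable α P ∧ ¬ BiPumpable α P

/-- A path without redundancy: two tiles share a tile type only if they are the
two extremities. -/
def NoRedundancy (P : List Tile) : Prop :=
  ∀ i j, i < j → j < P.length → (nth P i).2 = (nth P j).2 → i = 0 ∧ j = P.length - 1

/-- The single-tile assembly consisting of the tile `a`. -/
def singleTile (a : Tile) : Assembly := fun p => if p = a.1 then some a.2 else none

/-- `Q` grows on the infinite path `R` at index `i`: the only intersection of `Q`
with `R` is at `pos(Q₀) = pos(R_i)` and is an agreement. -/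
def GrowsOnPump (Q : List Tile) (R : ℕ → Tile) (i : ℕ) : Prop :=
  IsPath Q ∧ nth Q 0 = R i ∧
  ∀ k m, k < Q.length → (nth Q k).1 = (R m).1 → k = 0 ∧ m = i

/-- `Q` is an arc of the infinite path `R` between indices `i ≠ j`: the only
intersections of `Q` with `R` are agreements at its two extremities. -/
def IsArcOfPump (Q : List Tile) (R : ℕ → Tile) (i j : ℕ) : Prop :=
  IsPath Q ∧ i ≠ j ∧ nth Q 0 = R i ∧ nth Q (Q.length - 1) = R j ∧
  (∀ k m, k < Q.length → (nth Q k).1 = (R m).1 →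
    (k = 0 ∧ m = i) ∨ (k = Q.length - 1 ∧ m = j)) ∧
  (Q.length = 2 → j ≠ i + 1 ∧ i ≠ j + 1)

/-- `Q` is `v`-self-avoiding with respect to `α`: `Q` never intersects `Q + ℓ v` for
`ℓ ≥ 1`, and all large enough translations `Q + ℓ v` are paths of `α`. -/
def VSelfAvoiding (α : Assembly) (Q : List Tile) (v : Pos) : Prop :=
  (∀ ℓ : ℕ, 1 ≤ ℓ → ∀ a ∈ Q, ∀ b ∈ Q, a.1 ≠ b.1 + (ℓ : ℤ) • v) ∧
  ∃ L : ℕ, ∀ ℓ : ℕ, L ≤ ℓ → PathIn α (translatePath Q ((ℓ : ℤ) • v))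

/-- A linear subset of `ℤ²`. -/
def LinearSet (X : Set Pos) : Prop :=
  ∃ p u v : Pos, X = {q : Pos | ∃ ℓ ℓ' : ℕ, q = p + (ℓ : ℤ) • u + (ℓ' : ℤ) • v}

/-- A semilinear subset of `ℤ²`: a finite union of linear sets. -/
def SemilinearSet (X : Set Pos) : Prop :=
  ∃ (n : ℕ) (f : Fin n → Set Pos), (∀ k, LinearSet (f k)) ∧ X = ⋃ k, f k


/-! ## Auxiliary lemmas for semilinearity -/

lemma mem_adom_iff {α : Assembly} {p : Pos} : p ∈ adom α ↔ ∃ t, α p = some t := by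
  simp [adom, Option.ne_none_iff_exists']

/-- A generic "finite union of P-sets" predicate. -/
def SemiOf (P : Set Pos → Prop) (X : Set Pos) : Prop :=
  ∃ (n : ℕ) (f : Fin n → Set Pos), (∀ k, P (f k)) ∧ X = ⋃ k, f k

lemma semiOf_empty (P : Set Pos → Prop) : SemiOf P ∅ :=
  ⟨0, fun k => ∅, fun k => k.elim0, by simp⟩

lemma semiOf_mono {P Q : Set Pos → Prop} (h : ∀ X, P X → Q X) {X : Set Pos}
    (hX : SemiOf P X) : SemiOf Q X := by
  obtain ⟨n, f, hf, rfl⟩ := hX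
  exact ⟨n, f, fun k => h _ (hf k), rfl⟩

lemma semiOf_union {P : Set Pos → Prop} {X Y : Set Pos}
    (hX : SemiOf P X) (hY : SemiOf P Y) : SemiOf P (X ∪ Y) := by
  obtain ⟨n, f, hf, rfl⟩ := hX
  obtain ⟨m, g, hg, rfl⟩ := hY
  refine ⟨n + m, fun k => if hk : (k : ℕ) < n then f ⟨k, hk⟩
      else g ⟨(k : ℕ) - n, by omega⟩, fun k => ?_, ?_⟩
  · by_cases hk : (k : ℕ) < n <;> simp [hk, hf _, hg _]
  · ext x
    simp only [Set.mem_union, Set.mem_iUnion]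
    constructor
    · rintro (⟨i, hi⟩ | ⟨j, hj⟩)
      · exact ⟨⟨i, by omega⟩, by simpa [i.isLt] using hi⟩
      · refine ⟨⟨n + j, by omega⟩, ?_⟩
        have : ¬ (n + (j : ℕ) < n) := by omega
        simpa [this] using hj
    · rintro ⟨k, hk⟩
      by_cases h : (k : ℕ) < n
      · exact Or.inl ⟨⟨k, h⟩, by simpa [h] using hk⟩
      · exact Or.inr ⟨⟨(k : ℕ) - n, by omega⟩, by simpa [h] using hk⟩

lemma semiOf_iUnion {P : Set Pos → Prop} :
    ∀ (n : ℕ) (g : Fin n → Set Pos), (∀ k, SemiOf P (g k)) → SemiOf P (⋃ k, g k) := by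
  intro n
  induction n with
  | zero => intro g _; simpa using semiOf_empty P
  | succ n ih =>
    intro g hg
    have : (⋃ k, g k) = (⋃ k : Fin n, g k.castSucc) ∪ g (Fin.last n) := by
      ext x
      simp only [Set.mem_union, Set.mem_iUnion]
      constructor
      · rintro ⟨k, hk⟩
        rcases Fin.eq_castSucc_or_eq_last k with ⟨j, rfl⟩ | rfl
        · exact Or.inl ⟨j, hk⟩
        · exact Or.inr hk
      · rintro (⟨j, hj⟩ | h)
        · exact ⟨j.castSucc, hj⟩
        · exact ⟨Fin.last n, h⟩
    rw [this]
    exact semiOf_union (ih _ fun k => hg k.castSucc) (hg (Fin.last n))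

/-- One-direction linear sets. -/
def Lin1 (X : Set Pos) : Prop :=
  ∃ p u : Pos, X = {q : Pos | ∃ ℓ : ℕ, q = p + (ℓ : ℤ) • u}

lemma lin1_linear {X : Set Pos} (h : Lin1 X) : LinearSet X := by
  obtain ⟨p, u, rfl⟩ := h
  refine ⟨p, u, 0, ?_⟩
  ext q
  simp only [Set.mem_setOf_eq, smul_zero, add_zero]
  exact ⟨fun ⟨ℓ, h⟩ => ⟨ℓ, 0, h⟩, fun ⟨ℓ, _, h⟩ => ⟨ℓ, h⟩⟩

lemma finite_points {X : Set Pos} (h : X.Finite) :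
    ∃ (n : ℕ) (pt : Fin n → Pos), X = ⋃ k, {pt k} := by
  obtain ⟨s, rfl⟩ := h.exists_finset_coe
  refine ⟨s.toList.length, fun k => s.toList.get k, ?_⟩
  ext x
  simp only [Set.mem_iUnion, Set.mem_singleton_iff, Finset.coe_sort_coe, Finset.mem_coe]
  rw [← Finset.mem_toList, List.mem_iff_get]
  exact ⟨fun ⟨k, hk⟩ => ⟨k, hk.symm⟩, fun ⟨k, hk⟩ => ⟨k, hk.symm⟩⟩

lemma finite_semi1 {X : Set Pos} (h : X.Finite) : SemiOf Lin1 X := by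
  obtain ⟨n, pt, rfl⟩ := finite_points h
  refine ⟨n, fun k => {pt k}, fun k => ⟨pt k, 0, ?_⟩, rfl⟩
  ext q
  simp [eq_comm]

lemma comp0_finite {α : Assembly} (h : HasComplexity α 0) : (adom α).Finite := by
  cases h with
  | finite _ h => exact h

lemma adom_pump {β α : Assembly} {v : Pos}
    (hα : ∀ p t, α p = some t ↔ ∃ ℓ : ℕ, β (p - (ℓ : ℤ) • v) = some t) (p : Pos) :
    p ∈ adom α ↔ ∃ ℓ : ℕ, p - (ℓ : ℤ) • v ∈ adom β := by
  simp only [mem_adom_iff, hα]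
  tauto

lemma adom_union {n : ℕ} {f : Fin n → Assembly} {α : Assembly}
    (hα : ∀ p t, α p = some t ↔ ∃ k, f k p = some t) (p : Pos) :
    p ∈ adom α ↔ ∃ k, p ∈ adom (f k) := by
  simp only [mem_adom_iff, hα]
  tauto

lemma comp_le_one_semi1 {α : Assembly} {i : ℕ} (hα : HasComplexity α i) (hi : i ≤ 1) :
    SemiOf Lin1 (adom α) := by
  cases hα with
  | finite _ h => exact finite_semi1 h
  | pump j β v α hβ h =>
    have hj : j = 0 := by omega
    subst hj
    obtain ⟨n, pt, hpt⟩ := finite_points (comp0_finite hβ)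
    refine ⟨n, fun k => {q : Pos | ∃ ℓ : ℕ, q = pt k + (ℓ : ℤ) • v},
      fun k => ⟨pt k, v, rfl⟩, ?_⟩
    ext p
    rw [Set.mem_iUnion]
    simp only [Set.mem_setOf_eq]
    rw [adom_pump h]
    constructor
    · rintro ⟨ℓ, hℓ⟩
      rw [hpt, Set.mem_iUnion] at hℓ
      obtain ⟨k, hk⟩ := hℓ
      exact ⟨k, ℓ, by rw [← hk]; abel⟩
    · rintro ⟨k, ℓ, rfl⟩
      refine ⟨ℓ, ?_⟩
      rw [hpt, Set.mem_iUnion]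
      exact ⟨k, by simp⟩
  | union j n f c hc hf α h =>
    have : adom α = ⋃ k, adom (f k) := by
      ext p; rw [Set.mem_iUnion]; exact adom_union h p
    rw [this]
    refine semiOf_iUnion n _ fun k => ?_
    have hck : c k = 0 := by have := hc k; omega
    exact finite_semi1 (comp0_finite (hck ▸ hf k))

/-- The domain of an assembly of complexity at most 2 is a
semilinear subset of `ℤ²`. -/
theorem domain_semilinear_of_complexity_le_two
    (α : Assembly) (hconn : ConnectedDom α)
    (i : ℕ) (hi : i ≤ 2) (hα : HasComplexity α i) :
    SemilinearSet (adom α) := by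
  clear hconn
  cases hα with
  | finite _ h => exact semiOf_mono (fun X => lin1_linear) (finite_semi1 h)
  | pump j β v α hβ h =>
    have hj : j ≤ 1 := by omega
    obtain ⟨n, f, hf, hβdom⟩ := comp_le_one_semi1 hβ hj
    choose pt u hpu using hf
    refine ⟨n, fun k => {q : Pos | ∃ ℓ ℓ' : ℕ, q = pt k + (ℓ : ℤ) • u k + (ℓ' : ℤ) • v},
      fun k => ⟨pt k, u k, v, rfl⟩, ?_⟩
    ext p
    rw [Set.mem_iUnion]
    simp only [Set.mem_setOf_eq]
    rw [adom_pump h]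
    constructor
    · rintro ⟨ℓ', hℓ'⟩
      rw [hβdom, Set.mem_iUnion] at hℓ'
      obtain ⟨k, hk⟩ := hℓ'
      rw [hpu k] at hk
      obtain ⟨ℓ, hℓ⟩ := hk
      exact ⟨k, ℓ, ℓ', by rw [← hℓ]; abel⟩
    · rintro ⟨k, ℓ, ℓ', rfl⟩
      refine ⟨ℓ', ?_⟩
      rw [hβdom, Set.mem_iUnion]
      refine ⟨k, ?_⟩
      rw [hpu k]
      exact ⟨ℓ, by abel⟩
  | union j n f c hc hf α h =>
    have : adom α = ⋃ k, adom (f k) := by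
      ext p; rw [Set.mem_iUnion]; exact adom_union h p
    rw [this]
    refine semiOf_iUnion n _ fun k => ?_
    have hck : c k ≤ 1 := by have := hc k; omega
    exact semiOf_mono (fun X => lin1_linear) (comp_le_one_semi1 (hf k) hck)
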